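/- arXiv:2604.08144 — 2 statements merged into one kernel-verified Lean document; each statement's English description precedes it below -/
import Mathlib

section
/- Let G=(V,E) be a connected finite graph with n vertices and m edges, let α ∈ (0,1), and let w_0 ∈ ℝ^m_+ be an initial weight vector. Then there exists T_0 > 0 such that the entropy flow w_e'(t) = 𝔇_e^α(t), w_e(t) > 0, w_e(0) = w_{0,e} has a unique solution on [0, T_0]. -/
open Finset Filter Topology

namespace EntropyFlowPaper

variable {V : Type*} [Fintype V] [DecidableEq V]

/-- Effective weight: the value of `w` on edges, `0` on non-edges. -/
noncomputable def ew (G : SimpleGraph V) [DecidableRel G.Adj] (w : Sym2 V → ℝ) (a b : V) : ℝ :=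
  if G.Adj a b then w s(a, b) else 0

/-- Auxiliary layers: `(layerAux G x j).1 = N_j(x)` and `(layerAux G x j).2 = ⋃_{k ≤ j} N_k(x)`:
the `(j+1)`-st layer consists of the vertices adjacent to `⋃_{k ≤ j} N_k(x)` that do not lie
in `⋃_{k ≤ j} N_k(x)`. -/
def layerAux (G : SimpleGraph V) [DecidableRel G.Adj] (x : V) : ℕ → Finset V × Finset V
  | 0 => ({x}, {x})
  | (j + 1) =>
      let p := layerAux G x j
      let next := Finset.univ.filter fun u => u ∉ p.2 ∧ ∃ a ∈ p.2, G.Adj u a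
      (next, p.2 ∪ next)

/-- The `j`-step neighbor set `N_j(x)`. -/
def layer (G : SimpleGraph V) [DecidableRel G.Adj] (x : V) (j : ℕ) : Finset V :=
  (layerAux G x j).1

/-- The outward-walk probability `P(x, z)`, for `z` in the `ℓ`-th layer `N_ℓ(x)`:
`P(x,z) = Σ_{chains x = z₀, z₁ ∈ N₁(x), …, z_{ℓ-1} ∈ N_{ℓ-1}(x), z_ℓ = z}
  Π_k w_{z_{k-1} z_k} / (Σ_{u ∈ N_k(x)} w_{z_{k-1} u})`, written recursively. -/
noncomputable def outP (G : SimpleGraph V) [DecidableRel G.Adj] (w : Sym2 V → ℝ) (x : V) :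
    ℕ → V → ℝ
  | 0, z => if z = x then 1 else 0
  | (ℓ + 1), z => ∑ y ∈ layer G x ℓ,
      outP G w x ℓ y * ew G w y z / ∑ u ∈ layer G x (ℓ + 1), ew G w y u

/-- The `α`-lazy outward random walk `R_x^α(z)`: it equals `α` at `z = x`; for `z ∈ N_j(x)`
(`j ≥ 1`) it equals `(1-α)^j * α * P(x,z)` if `z` is adjacent to `N_{j+1}(x)`, and
`(1-α)^j * P(x,z)` otherwise. -/
noncomputable def lazyWalk (G : SimpleGraph V) [DecidableRel G.Adj] (w : Sym2 V → ℝ) (α : ℝ)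
    (x z : V) : ℝ :=
  if z = x then α
  else ∑ j ∈ Finset.Icc 1 (Fintype.card V),
    (if z ∈ layer G x j then
      (if ∃ u ∈ layer G x (j + 1), G.Adj z u then (1 - α) ^ j * α * outP G w x j z
       else (1 - α) ^ j * outP G w x j z)
     else 0)

/-- Kullback–Leibler divergence `D_KL(P, Q) = Σ_z P z * log (P z / Q z)` on a finite set. -/
noncomputable def KL (P Q : V → ℝ) : ℝ := ∑ z, P z * Real.log (P z / Q z)

/-- The edge entropy `𝔇_e^α = D_KL(R_x^α, R_y^α) + D_KL(R_y^α, R_x^α)` for the edge `e = xy`. -/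
noncomputable def entropyD (G : SimpleGraph V) [DecidableRel G.Adj] (w : Sym2 V → ℝ) (α : ℝ)
    (x y : V) : ℝ :=
  KL (lazyWalk G w α x) (lazyWalk G w α y) + KL (lazyWalk G w α y) (lazyWalk G w α x)

/-- Euclidean distance `|w - w'|` between two weight vectors, over the edges of `G`. -/
noncomputable def wdist (G : SimpleGraph V) [DecidableRel G.Adj] (w w' : Sym2 V → ℝ) : ℝ :=
  Real.sqrt (∑ e ∈ G.edgeFinset, (w e - w' e) ^ 2)

/-- `w` is a solution of the entropy flow `w_e'(t) = 𝔇_e^α(t)`, `w_e(t) > 0`, `w_e(0) = w0_e`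
on the time set `S`. -/
def IsEntropyFlowSolutionOn (G : SimpleGraph V) [DecidableRel G.Adj] (α : ℝ)
    (w0 : Sym2 V → ℝ) (S : Set ℝ) (w : ℝ → Sym2 V → ℝ) : Prop :=
  (∀ e ∈ G.edgeFinset, w 0 e = w0 e) ∧
  (∀ t ∈ S, ∀ e ∈ G.edgeFinset, 0 < w t e) ∧
  (∀ t ∈ S, ∀ x y : V, G.Adj x y →
    HasDerivWithinAt (fun τ => w τ s(x, y)) (entropyD G (w t) α x y) S t)

end EntropyFlowPaper

section AuxLemmas

open Metric Set Finset

namespace EntropyFlowPaper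

variable {V : Type*} [Fintype V] [DecidableEq V] {G : SimpleGraph V} [DecidableRel G.Adj]

/-- The open region of weight vectors positive on all edges. -/
def posRegion (G : SimpleGraph V) [DecidableRel G.Adj] : Set (Sym2 V → ℝ) :=
  {w | ∀ e ∈ G.edgeFinset, 0 < w e}

omit [DecidableEq V] in
lemma isOpen_posRegion : IsOpen (posRegion G) := by
  have : posRegion G = ⋂ e ∈ G.edgeFinset, {w : Sym2 V → ℝ | 0 < w e} := by
    ext w; simp [posRegion]
  rw [this]
  exact isOpen_biInter_finset fun e _ => isOpen_lt continuous_const (continuous_apply e)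

lemma layerAux_snd_succ (x : V) (j : ℕ) :
    (layerAux G x (j + 1)).2 = (layerAux G x j).2 ∪ layer G x (j + 1) := rfl

lemma layer_succ_def (x : V) (j : ℕ) :
    layer G x (j + 1) = Finset.univ.filter
      (fun u => u ∉ (layerAux G x j).2 ∧ ∃ a ∈ (layerAux G x j).2, G.Adj u a) := rfl

lemma layerAux_snd_subset_succ (x : V) (j : ℕ) :
    (layerAux G x j).2 ⊆ (layerAux G x (j + 1)).2 := by
  rw [layerAux_snd_succ]; exact Finset.subset_union_left

lemma layerAux_snd_mono (x : V) {j k : ℕ} (h : j ≤ k) :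
    (layerAux G x j).2 ⊆ (layerAux G x k).2 := by
  induction k, h using Nat.le_induction with
  | base => exact subset_rfl
  | succ k hk ih => exact ih.trans (layerAux_snd_subset_succ x k)

lemma layer_subset_snd (x : V) (j : ℕ) : layer G x j ⊆ (layerAux G x j).2 := by
  cases j with
  | zero => exact subset_rfl
  | succ j => rw [layerAux_snd_succ]; exact Finset.subset_union_right

lemma not_mem_snd_of_mem_layer_succ {x z : V} {j : ℕ} (hz : z ∈ layer G x (j + 1)) :
    z ∉ (layerAux G x j).2 := by
  rw [layer_succ_def, Finset.mem_filter] at hz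
  exact hz.2.1

lemma mem_snd_succ_of_adj {x a u : V} {j : ℕ} (ha : a ∈ (layerAux G x j).2)
    (h : G.Adj u a) : u ∈ (layerAux G x (j + 1)).2 := by
  by_cases hu : u ∈ (layerAux G x j).2
  · exact layerAux_snd_subset_succ x j hu
  · rw [layerAux_snd_succ]
    refine Finset.mem_union_right _ ?_
    rw [layer_succ_def, Finset.mem_filter]
    exact ⟨Finset.mem_univ u, hu, a, ha, h⟩

lemma exists_layer_adj {x z : V} {j : ℕ} (hz : z ∈ layer G x (j + 1)) :
    ∃ y ∈ layer G x j, G.Adj y z := by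
  have hz' := hz
  rw [layer_succ_def, Finset.mem_filter] at hz'
  obtain ⟨-, hznot, a, ha, hadj⟩ := hz'
  cases j with
  | zero => exact ⟨a, ha, hadj.symm⟩
  | succ k =>
    rw [layerAux_snd_succ] at ha
    rcases Finset.mem_union.1 ha with ha' | ha'
    · exact absurd (mem_snd_succ_of_adj ha' hadj) (not_mem_snd_of_mem_layer_succ hz)
    · exact ⟨a, ha', hadj.symm⟩

lemma mem_snd_of_walk {x z : V} (p : G.Walk z x) : z ∈ (layerAux G x p.length).2 := by
  induction p with
  | nil => simp [layerAux]
  | cons h q ih => exact mem_snd_succ_of_adj ih h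

lemma exists_mem_layer_of_mem_snd {x z : V} {n : ℕ} (hz : z ∈ (layerAux G x n).2) :
    ∃ j ≤ n, z ∈ layer G x j := by
  induction n with
  | zero => exact ⟨0, le_rfl, hz⟩
  | succ n ih =>
    rw [layerAux_snd_succ] at hz
    rcases Finset.mem_union.1 hz with h | h
    · obtain ⟨j, hj, hmem⟩ := ih h
      exact ⟨j, hj.trans (Nat.le_succ n), hmem⟩
    · exact ⟨n + 1, le_rfl, h⟩

lemma layer_succ_eq_empty {x : V} {j : ℕ} (h : layer G x (j + 1) = ∅) :
    layer G x (j + 2) = ∅ := by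
  have hsnd : (layerAux G x (j + 1)).2 = (layerAux G x j).2 := by
    rw [layerAux_snd_succ, h, Finset.union_empty]
  rw [layer_succ_def x (j + 1), hsnd, ← layer_succ_def x j, h]

lemma layer_empty_mono {x : V} {j : ℕ} (h : layer G x (j + 1) = ∅) :
    ∀ k, layer G x (j + 1 + k) = ∅ := by
  intro k
  induction k with
  | zero => exact h
  | succ k ih =>
    have h1 : layer G x ((j + k) + 1) = ∅ := by
      rw [show j + k + 1 = j + 1 + k by omega]; exact ih
    have h2 := layer_succ_eq_empty h1
    rw [show j + 1 + (k + 1) = (j + k) + 2 by omega]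
    exact h2

lemma layer_nonempty_of_le {x : V} {j k : ℕ} (hj : (layer G x j).Nonempty)
    (hk : k ≤ j) : (layer G x k).Nonempty := by
  by_contra hne
  rw [Finset.not_nonempty_iff_eq_empty] at hne
  cases k with
  | zero =>
    simp only [layer, layerAux] at hne
    exact Finset.singleton_ne_empty x hne
  | succ k =>
    obtain ⟨m, rfl⟩ := Nat.exists_eq_add_of_le hk
    rw [layer_empty_mono hne m] at hj
    exact Finset.not_nonempty_empty hj

lemma lt_card_of_mem_layer {x z : V} {j : ℕ} (hz : z ∈ layer G x j) :
    j < Fintype.card V := by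
  have hne : ∀ k : Fin (j + 1), (layer G x (k : ℕ)).Nonempty :=
    fun k => layer_nonempty_of_le ⟨z, hz⟩ (Nat.lt_succ_iff.1 k.2)
  choose f hf using hne
  have key : ∀ a b : Fin (j + 1), (a : ℕ) < (b : ℕ) → f a ≠ f b := by
    intro a b hlt hab
    have h1 : f a ∈ (layerAux G x ((b : ℕ) - 1)).2 :=
      layerAux_snd_mono x (by omega) (layer_subset_snd x (a : ℕ) (hf a))
    have h2 : f b ∉ (layerAux G x ((b : ℕ) - 1)).2 := by
      have hb1 : (b : ℕ) = ((b : ℕ) - 1) + 1 := by omega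
      have hfb := hf b
      rw [hb1] at hfb
      exact not_mem_snd_of_mem_layer_succ hfb
    rw [hab] at h1
    exact h2 h1
  have hinj : Function.Injective f := by
    intro a b hab
    rcases lt_trichotomy (a : ℕ) (b : ℕ) with h | h | h
    · exact absurd hab (key a b h)
    · exact Fin.ext h
    · exact absurd hab.symm (key b a h)
  have := Fintype.card_le_of_injective f hinj
  simpa using this

end EntropyFlowPaper

end AuxLemmas
section AuxLemmas2

open Metric Set Finset

namespace EntropyFlowPaper

variable {V : Type*} [Fintype V] [DecidableEq V] {G : SimpleGraph V} [DecidableRel G.Adj]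
variable {w : Sym2 V → ℝ}

lemma ew_nonneg (hw : w ∈ posRegion G) (a b : V) : 0 ≤ ew G w a b := by
  unfold ew
  split_ifs with h
  · exact (hw _ (SimpleGraph.mem_edgeFinset.2 h)).le
  · exact le_rfl

lemma ew_pos (hw : w ∈ posRegion G) {a b : V} (h : G.Adj a b) : 0 < ew G w a b := by
  unfold ew
  rw [if_pos h]
  exact hw _ (SimpleGraph.mem_edgeFinset.2 h)

lemma outP_nonneg (hw : w ∈ posRegion G) (x : V) : ∀ (j : ℕ) (z : V), 0 ≤ outP G w x j z := by
  intro j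
  induction j with
  | zero => intro z; unfold outP; split_ifs <;> norm_num
  | succ j ih =>
    intro z
    unfold outP
    refine Finset.sum_nonneg fun y _ => div_nonneg (mul_nonneg (ih y) (ew_nonneg hw y z))
      (Finset.sum_nonneg fun u _ => ew_nonneg hw y u)

lemma outP_pos (hw : w ∈ posRegion G) {x z : V} : ∀ {j : ℕ}, z ∈ layer G x j →
    0 < outP G w x j z := by
  intro j
  induction j generalizing z with
  | zero =>
    intro hz
    simp only [layer, layerAux, Finset.mem_singleton] at hz
    unfold outP
    rw [if_pos hz]
    norm_num
  | succ j ih =>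
    intro hz
    obtain ⟨y, hy, hadj⟩ := exists_layer_adj hz
    unfold outP
    refine Finset.sum_pos' (fun y' _ => div_nonneg (mul_nonneg (outP_nonneg hw x j y')
      (ew_nonneg hw y' z)) (Finset.sum_nonneg fun u _ => ew_nonneg hw y' u)) ⟨y, hy, ?_⟩
    refine div_pos (mul_pos (ih hy) (ew_pos hw hadj)) ?_
    refine Finset.sum_pos' (fun u _ => ew_nonneg hw y u) ⟨z, hz, ew_pos hw hadj⟩

lemma lazyWalk_pos (hG : G.Connected) (hw : w ∈ posRegion G) {α : ℝ}
    (hα : α ∈ Set.Ioo (0 : ℝ) 1) (x z : V) : 0 < lazyWalk G w α x z := by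
  unfold lazyWalk
  split_ifs with hzx
  · exact hα.1
  · obtain ⟨p⟩ := hG.preconnected z x
    obtain ⟨j, hjn, hzj⟩ := exists_mem_layer_of_mem_snd (mem_snd_of_walk p)
    have hj1 : 1 ≤ j := by
      rcases Nat.eq_zero_or_pos j with rfl | h
      · simp only [layer, layerAux, Finset.mem_singleton] at hzj
        exact absurd hzj hzx
      · exact h
    have hjcard : j ≤ Fintype.card V := (lt_card_of_mem_layer hzj).le
    have h1α : 0 < 1 - α := by linarith [hα.2]
    refine Finset.sum_pos' (fun j' _ => ?_) ⟨j, Finset.mem_Icc.2 ⟨hj1, hjcard⟩, ?_⟩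
    · split_ifs with h1 h2
      · exact mul_nonneg (mul_nonneg (pow_nonneg h1α.le _) hα.1.le) (outP_nonneg hw x j' _)
      · exact mul_nonneg (pow_nonneg h1α.le _) (outP_nonneg hw x j' _)
      · exact le_rfl
    · rw [if_pos hzj]
      split_ifs with h1
      · exact mul_pos (mul_pos (pow_pos h1α _) hα.1) (outP_pos hw hzj)
      · exact mul_pos (pow_pos h1α _) (outP_pos hw hzj)

end EntropyFlowPaper

end AuxLemmas2
section AuxLemmas3

set_option linter.unusedSectionVars false

open Metric Set Finset

namespace EntropyFlowPaper

variable {V : Type*} [Fintype V] [DecidableEq V] {G : SimpleGraph V} [DecidableRel G.Adj]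
variable {w₀ : Sym2 V → ℝ}

lemma contDiff_ew (a b : V) : ContDiff ℝ 1 (fun w : Sym2 V → ℝ => ew G w a b) := by
  unfold ew
  split_ifs with h
  · exact (ContinuousLinearMap.proj (R := ℝ) (φ := fun _ : Sym2 V => ℝ) s(a, b)).contDiff
  · exact contDiff_const

lemma contDiffAt_outP (hw : w₀ ∈ posRegion G) (x : V) (j : ℕ) (z : V) :
    ContDiffAt ℝ 1 (fun w => outP G w x j z) w₀ := by
  induction j generalizing z with
  | zero =>
    have : (fun w : Sym2 V → ℝ => outP G w x 0 z) = fun _ => if z = x then 1 else 0 := rfl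
    rw [this]
    exact contDiffAt_const
  | succ j ih =>
    have : (fun w : Sym2 V → ℝ => outP G w x (j + 1) z) = fun w => ∑ y ∈ layer G x j,
        outP G w x j y * ew G w y z / ∑ u ∈ layer G x (j + 1), ew G w y u := rfl
    rw [this]
    refine ContDiffAt.sum fun y _ => ?_
    by_cases hden : ∃ u ∈ layer G x (j + 1), G.Adj y u
    · obtain ⟨u, hu, hadj⟩ := hden
      have hne : (∑ u ∈ layer G x (j + 1), ew G w₀ y u) ≠ 0 := by
        refine ne_of_gt (Finset.sum_pos' (fun u' _ => ew_nonneg hw y u') ⟨u, hu, ew_pos hw hadj⟩)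
      exact ((ih y).mul (contDiff_ew y z).contDiffAt).div
        (ContDiffAt.sum fun u _ => (contDiff_ew y u).contDiffAt) hne
    · push_neg at hden
      have hzero : (fun w : Sym2 V → ℝ =>
          outP G w x j y * ew G w y z / ∑ u ∈ layer G x (j + 1), ew G w y u) = fun _ => 0 := by
        funext w
        have : (∑ u ∈ layer G x (j + 1), ew G w y u) = 0 := by
          refine Finset.sum_eq_zero fun u hu => ?_
          unfold ew
          rw [if_neg (hden u hu)]
        rw [this, div_zero]
      rw [hzero]
      exact contDiffAt_const

lemma contDiffAt_lazyWalk (hw : w₀ ∈ posRegion G) (α : ℝ) (x z : V) :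
    ContDiffAt ℝ 1 (fun w => lazyWalk G w α x z) w₀ := by
  unfold lazyWalk
  by_cases hzx : z = x
  · simp only [if_pos hzx]
    exact contDiffAt_const
  · simp only [if_neg hzx]
    refine ContDiffAt.sum fun j _ => ?_
    by_cases h1 : z ∈ layer G x j
    · simp only [if_pos h1]
      by_cases h2 : ∃ u ∈ layer G x (j + 1), G.Adj z u
      · simp only [if_pos h2]
        exact (contDiffAt_const.mul (contDiffAt_outP hw x j z))
      · simp only [if_neg h2]
        exact (contDiffAt_const.mul (contDiffAt_outP hw x j z))
    · simp only [if_neg h1]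
      exact contDiffAt_const

lemma contDiffAt_KL_lazy (hG : G.Connected) (hw : w₀ ∈ posRegion G) {α : ℝ}
    (hα : α ∈ Set.Ioo (0 : ℝ) 1) (x y : V) :
    ContDiffAt ℝ 1 (fun w => KL (lazyWalk G w α x) (lazyWalk G w α y)) w₀ := by
  unfold KL
  refine ContDiffAt.sum fun z _ => ?_
  have hP := contDiffAt_lazyWalk hw α x z
  have hQ := contDiffAt_lazyWalk hw α y z
  have hPpos := lazyWalk_pos hG hw hα x z
  have hQpos := lazyWalk_pos hG hw hα y z
  refine hP.mul (ContDiffAt.log (hP.div hQ hQpos.ne') ?_)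
  exact (div_pos hPpos hQpos).ne'

lemma contDiffAt_entropyD (hG : G.Connected) (hw : w₀ ∈ posRegion G) {α : ℝ}
    (hα : α ∈ Set.Ioo (0 : ℝ) 1) (x y : V) :
    ContDiffAt ℝ 1 (fun w => entropyD G w α x y) w₀ := by
  unfold entropyD
  exact (contDiffAt_KL_lazy hG hw hα x y).add (contDiffAt_KL_lazy hG hw hα y x)

/-- The entropy-flow vector field on the space of weight vectors. -/
noncomputable def Fvec (G : SimpleGraph V) [DecidableRel G.Adj] (α : ℝ)
    (w : Sym2 V → ℝ) : Sym2 V → ℝ := fun e =>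
  if e ∈ G.edgeFinset then
    Sym2.lift ⟨fun x y => entropyD G w α x y, fun x y => by
      simp only [entropyD]; ring⟩ e
  else 0

lemma Fvec_adj {α : ℝ} {w : Sym2 V → ℝ} {x y : V} (h : G.Adj x y) :
    Fvec G α w s(x, y) = entropyD G w α x y := by
  unfold Fvec
  rw [if_pos (SimpleGraph.mem_edgeFinset.2 h), Sym2.lift_mk]

lemma Fvec_not_edge {α : ℝ} {w : Sym2 V → ℝ} {e : Sym2 V} (h : e ∉ G.edgeFinset) :
    Fvec G α w e = 0 := by
  unfold Fvec
  rw [if_neg h]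

lemma contDiffAt_Fvec (hG : G.Connected) (hw : w₀ ∈ posRegion G) {α : ℝ}
    (hα : α ∈ Set.Ioo (0 : ℝ) 1) :
    ContDiffAt ℝ 1 (Fvec G α) w₀ := by
  rw [contDiffAt_pi]
  intro e
  induction e using Sym2.ind with
  | _ x y =>
    by_cases he : s(x, y) ∈ G.edgeFinset
    · have : (fun w => Fvec G α w s(x, y)) = fun w => entropyD G w α x y := by
        funext w
        exact Fvec_adj ((SimpleGraph.mem_edgeSet G).1 (SimpleGraph.mem_edgeFinset.1 he))
      rw [this]
      exact contDiffAt_entropyD hG hw hα x y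
    · have : (fun w => Fvec G α w s(x, y)) = fun _ => 0 := by
        funext w
        exact Fvec_not_edge he
      rw [this]
      exact contDiffAt_const

end EntropyFlowPaper

end AuxLemmas3
section AuxLemmas4

set_option linter.unusedSectionVars false

open Metric Set Finset

namespace EntropyFlowPaper

variable {V : Type*} [Fintype V] [DecidableEq V] {G : SimpleGraph V} [DecidableRel G.Adj]
variable {w w' : Sym2 V → ℝ}

lemma ew_congr (h : ∀ e ∈ G.edgeFinset, w e = w' e) (a b : V) :
    ew G w a b = ew G w' a b := by
  unfold ew
  split_ifs with hab
  · exact h _ (SimpleGraph.mem_edgeFinset.2 hab)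
  · rfl

lemma outP_congr (h : ∀ e ∈ G.edgeFinset, w e = w' e) (x : V) (j : ℕ) (z : V) :
    outP G w x j z = outP G w' x j z := by
  induction j generalizing z with
  | zero => rfl
  | succ j ih =>
    show (∑ y ∈ layer G x j, outP G w x j y * ew G w y z / ∑ u ∈ layer G x (j+1), ew G w y u)
      = _
    refine Finset.sum_congr rfl fun y _ => ?_
    rw [ih y, ew_congr h y z]
    congr 1
    exact Finset.sum_congr rfl fun u _ => ew_congr h y u

lemma lazyWalk_congr (h : ∀ e ∈ G.edgeFinset, w e = w' e) (α : ℝ) (x z : V) :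
    lazyWalk G w α x z = lazyWalk G w' α x z := by
  unfold lazyWalk
  split_ifs with hzx
  · rfl
  · refine Finset.sum_congr rfl fun j _ => ?_
    rw [outP_congr h x j z]

lemma entropyD_congr (h : ∀ e ∈ G.edgeFinset, w e = w' e) (α : ℝ) (x y : V) :
    entropyD G w α x y = entropyD G w' α x y := by
  have hx : lazyWalk G w α x = lazyWalk G w' α x := funext fun z => lazyWalk_congr h α x z
  have hy : lazyWalk G w α y = lazyWalk G w' α y := funext fun z => lazyWalk_congr h α y z
  unfold entropyD
  rw [hx, hy]

lemma Fvec_congr (h : ∀ e ∈ G.edgeFinset, w e = w' e) (α : ℝ) :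
    Fvec G α w = Fvec G α w' := by
  funext e
  induction e using Sym2.ind with
  | _ x y =>
    by_cases he : s(x, y) ∈ G.edgeFinset
    · have hadj := (SimpleGraph.mem_edgeSet G).1 (SimpleGraph.mem_edgeFinset.1 he)
      rw [Fvec_adj hadj, Fvec_adj hadj, entropyD_congr h]
    · rw [Fvec_not_edge he, Fvec_not_edge he]

end EntropyFlowPaper

end AuxLemmas4
section AuxLemmas5

set_option linter.unusedSectionVars false

open Metric Set Finset
open scoped NNReal

namespace EntropyFlowPaper

/-- Picard–Lindelöf solution that moreover stays in the closed ball. -/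
lemma pl_exists_solution_mem {E : Type*} [NormedAddCommGroup E] [NormedSpace ℝ E]
    [CompleteSpace E] {v : ℝ → E → E} {tMin tMax : ℝ} {t₀ : Icc tMin tMax} {x₀ : E}
    {R C L : ℝ≥0}
    (hpl : IsPicardLindelof v t₀ x₀ R 0 C L) :
    ∃ f : ℝ → E, f t₀ = x₀ ∧ ∀ t ∈ Icc tMin tMax,
      f t ∈ closedBall x₀ R ∧ HasDerivWithinAt f (v t (f t)) (Icc tMin tMax) t := by
  obtain ⟨f, hf⟩ := ODE.FunSpace.exists_isFixedPt_next hpl (mem_closedBall_self le_rfl)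
  refine ⟨f.compProj, by rw [ODE.FunSpace.compProj_val, ← hf, ODE.FunSpace.next_apply₀],
    fun t ht => ⟨f.compProj_mem_closedBall hpl.mul_max_le, ?_⟩⟩
  apply ODE.hasDerivWithinAt_picard_Icc t₀.2 hpl.continuousOn_uncurry
    f.continuous_compProj.continuousOn (fun _ ht' ↦ f.compProj_mem_closedBall hpl.mul_max_le)
    x₀ ht |>.congr_of_mem _ ht
  intro t' ht'
  nth_rw 1 [← hf]
  rw [ODE.FunSpace.compProj_of_mem ht', ODE.FunSpace.next_apply]

variable {V : Type*} [Fintype V] [DecidableEq V] {G : SimpleGraph V} [DecidableRel G.Adj]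

/-- Existence of good Picard–Lindelöf data for the entropy flow vector field. -/
lemma exists_good_pl (hG : G.Connected) {α : ℝ} (hα : α ∈ Set.Ioo (0 : ℝ) 1)
    {w₀ : Sym2 V → ℝ} (hw : w₀ ∈ posRegion G) :
    ∃ T0 : ℝ, ∃ hT : 0 < T0, ∃ (L : ℝ≥0) (r C : ℝ≥0),
      closedBall w₀ r ⊆ posRegion G ∧
      IsPicardLindelof (fun _ : ℝ => Fvec G α)
        (⟨0, le_rfl, hT.le⟩ : Icc (0 : ℝ) T0) w₀ r 0 C L := by
  obtain ⟨L, s, hs, hlip⟩ := (contDiffAt_Fvec hG hw hα).exists_lipschitzOnWith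
  have hmem : s ∩ posRegion G ∈ 𝓝 w₀ := Filter.inter_mem hs (isOpen_posRegion.mem_nhds hw)
  obtain ⟨r, hr0, hball⟩ := Metric.nhds_basis_closedBall.mem_iff.1 hmem
  have hcomp : IsCompact (closedBall w₀ r) := isCompact_closedBall w₀ r
  have hcont : ContinuousOn (Fvec G α) (closedBall w₀ r) :=
    hlip.continuousOn.mono fun z hz => (hball hz).1
  obtain ⟨C, hC⟩ := hcomp.exists_bound_of_continuousOn hcont
  have hC'pos : (0 : ℝ) < max C 1 := lt_of_lt_of_le one_pos (le_max_right C 1)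
  have hT0 : (0 : ℝ) < r / max C 1 := div_pos hr0 hC'pos
  refine ⟨r / max C 1, hT0, L, ⟨r, hr0.le⟩, ⟨max C 1, hC'pos.le⟩,
    fun z hz => (hball hz).2, ?_⟩
  exact
    { lipschitzOnWith := fun t _ => hlip.mono fun z hz => (hball hz).1
      continuousOn := fun x _ => continuousOn_const
      norm_le := fun t _ x hx => (hC x hx).trans (le_max_left C 1)
      mul_max_le := by
        show max C 1 * max (r / max C 1 - 0) (0 - 0) ≤ r - 0
        rw [sub_zero, sub_self, sub_zero, max_eq_left hT0.le, mul_div_assoc',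
          mul_div_cancel_left₀ _ hC'pos.ne']
        }

end EntropyFlowPaper

end AuxLemmas5
section AuxLemmas6

set_option linter.unusedSectionVars false

open Metric Set Finset
open scoped NNReal

namespace EntropyFlowPaper

variable {V : Type*} [Fintype V] [DecidableEq V] {G : SimpleGraph V} [DecidableRel G.Adj]

/-- Uniqueness for the abstract entropy flow ODE, via local Lipschitz continuity. -/
lemma entropy_flow_unique (hG : G.Connected) {α : ℝ} (hα : α ∈ Set.Ioo (0 : ℝ) 1)
    {T0 : ℝ} (hT0 : 0 < T0) {v v' : ℝ → Sym2 V → ℝ}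
    (hv0 : v 0 = v' 0)
    (hvd : ∀ t ∈ Icc (0 : ℝ) T0, HasDerivWithinAt v (Fvec G α (v t)) (Icc 0 T0) t)
    (hvΩ : ∀ t ∈ Icc (0 : ℝ) T0, v t ∈ posRegion G)
    (hvd' : ∀ t ∈ Icc (0 : ℝ) T0, HasDerivWithinAt v' (Fvec G α (v' t)) (Icc 0 T0) t)
    (hvΩ' : ∀ t ∈ Icc (0 : ℝ) T0, v' t ∈ posRegion G) :
    Set.EqOn v v' (Icc 0 T0) := by
  have hvc : ContinuousOn v (Icc 0 T0) := fun t ht => (hvd t ht).continuousWithinAt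
  have hvc' : ContinuousOn v' (Icc 0 T0) := fun t ht => (hvd' t ht).continuousWithinAt
  set B : Set ℝ := {t | t ∈ Icc (0 : ℝ) T0 ∧ Set.EqOn v v' (Icc 0 t)} with hB
  have h0B : (0 : ℝ) ∈ B := by
    refine ⟨⟨le_rfl, hT0.le⟩, fun s hs => ?_⟩
    have : s = 0 := le_antisymm hs.2 hs.1
    rw [this, hv0]
  have hBdd : BddAbove B := ⟨T0, fun t ht => ht.1.2⟩
  set τ := sSup B with hτdef
  have hτ0 : 0 ≤ τ := le_csSup hBdd h0B
  have hτT : τ ≤ T0 := csSup_le ⟨0, h0B⟩ fun t ht => ht.1.2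
  have hIco : ∀ t ∈ Ico (0 : ℝ) τ, v t = v' t := by
    intro t ht
    obtain ⟨b, hbB, htb⟩ := exists_lt_of_lt_csSup ⟨0, h0B⟩ ht.2
    exact hbB.2 ⟨ht.1, htb.le⟩
  have hτeq : v τ = v' τ := by
    rcases eq_or_lt_of_le hτ0 with heq | hpos
    · rw [← heq]; exact hv0
    · have hne : (𝓝[Ico (0 : ℝ) τ] τ).NeBot := by
        apply mem_closure_iff_nhdsWithin_neBot.1
        rw [closure_Ico hpos.ne]
        exact ⟨hτ0, le_rfl⟩
      have hsub : Ico (0 : ℝ) τ ⊆ Icc 0 T0 := fun s hs => ⟨hs.1, hs.2.le.trans hτT⟩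
      have hvt : Filter.Tendsto v (𝓝[Ico (0 : ℝ) τ] τ) (𝓝 (v τ)) :=
        (hvc τ ⟨hτ0, hτT⟩).mono hsub
      have hvt' : Filter.Tendsto v' (𝓝[Ico (0 : ℝ) τ] τ) (𝓝 (v' τ)) :=
        (hvc' τ ⟨hτ0, hτT⟩).mono hsub
      have heqf : v =ᶠ[𝓝[Ico (0 : ℝ) τ] τ] v' := eventually_nhdsWithin_of_forall hIco
      exact tendsto_nhds_unique (hvt.congr' heqf) hvt'
  have hτB : τ ∈ B := by
    refine ⟨⟨hτ0, hτT⟩, fun s hs => ?_⟩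
    rcases eq_or_lt_of_le hs.2 with heq | hlt
    · rw [heq]; exact hτeq
    · exact hIco s ⟨hs.1, hlt⟩
  rcases eq_or_lt_of_le hτT with heq | hlt
  · rw [← heq]; exact hτB.2
  · exfalso
    have hτmem : τ ∈ Icc (0 : ℝ) T0 := ⟨hτ0, hτT⟩
    have hx₁ : v τ ∈ posRegion G := hvΩ τ hτmem
    obtain ⟨K, s, hs, hlip⟩ := (contDiffAt_Fvec hG hx₁ hα).exists_lipschitzOnWith
    obtain ⟨ρ, hρ0, hρball⟩ := Metric.nhds_basis_closedBall.mem_iff.1 hs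
    have hcv : Filter.Tendsto v (𝓝[Icc (0:ℝ) T0] τ) (𝓝 (v τ)) := hvc τ hτmem
    have hcv' : Filter.Tendsto v' (𝓝[Icc (0:ℝ) T0] τ) (𝓝 (v τ)) := by
      rw [hτeq]; exact hvc' τ hτmem
    obtain ⟨ε₁, hε₁0, hball1⟩ :=
      Metric.mem_nhdsWithin_iff.1 (hcv (Metric.ball_mem_nhds (v τ) hρ0))
    obtain ⟨ε₂, hε₂0, hball2⟩ :=
      Metric.mem_nhdsWithin_iff.1 (hcv' (Metric.ball_mem_nhds (v τ) hρ0))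
    set ε := min (min (ε₁ / 2) (ε₂ / 2)) (T0 - τ) with hεdef
    have hε0 : 0 < ε := by
      refine lt_min (lt_min (by linarith) (by linarith)) (by linarith)
    have hsub2 : Icc τ (τ + ε) ⊆ Icc (0 : ℝ) T0 := by
      intro t ht
      constructor
      · linarith [ht.1]
      · have : τ + ε ≤ T0 := by
          have := min_le_right (min (ε₁ / 2) (ε₂ / 2)) (T0 - τ)
          linarith [ht.2]
        linarith [ht.2]
    have hmemv : ∀ t ∈ Icc τ (τ + ε), v t ∈ closedBall (v τ) ρ := by
      intro t ht
      have h1 : t ∈ Metric.ball τ ε₁ ∩ Icc (0 : ℝ) T0 := by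
        refine ⟨?_, hsub2 ht⟩
        rw [Real.ball_eq_Ioo]
        constructor
        · linarith [ht.1]
        · have h2 := min_le_left (min (ε₁ / 2) (ε₂ / 2)) (T0 - τ)
          have h3 := min_le_left (ε₁ / 2) (ε₂ / 2)
          have : ε ≤ ε₁ / 2 := le_trans h2 h3
          linarith [ht.2]
      exact Metric.ball_subset_closedBall (hball1 h1)
    have hmemv' : ∀ t ∈ Icc τ (τ + ε), v' t ∈ closedBall (v τ) ρ := by
      intro t ht
      have h1 : t ∈ Metric.ball τ ε₂ ∩ Icc (0 : ℝ) T0 := by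
        refine ⟨?_, hsub2 ht⟩
        rw [Real.ball_eq_Ioo]
        constructor
        · linarith [ht.1]
        · have h2 := min_le_left (min (ε₁ / 2) (ε₂ / 2)) (T0 - τ)
          have h3 := min_le_right (ε₁ / 2) (ε₂ / 2)
          have : ε ≤ ε₂ / 2 := le_trans h2 h3
          linarith [ht.2]
      exact Metric.ball_subset_closedBall (hball2 h1)
    have hderiv : ∀ t ∈ Ico τ (τ + ε),
        HasDerivWithinAt v (Fvec G α (v t)) (Ici t) t := by
      intro t ht
      have htmem : t ∈ Icc (0 : ℝ) T0 := hsub2 ⟨ht.1, ht.2.le⟩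
      have htlt : t < T0 := by
        have : τ + ε ≤ T0 := by
          have := min_le_right (min (ε₁ / 2) (ε₂ / 2)) (T0 - τ); linarith
        linarith [ht.2]
      refine (hvd t htmem).mono_of_mem_nhdsWithin ?_
      rw [mem_nhdsWithin]
      exact ⟨Iio T0, isOpen_Iio, htlt, fun u hu => ⟨le_trans htmem.1 hu.2, hu.1.le⟩⟩
    have hderiv' : ∀ t ∈ Ico τ (τ + ε),
        HasDerivWithinAt v' (Fvec G α (v' t)) (Ici t) t := by
      intro t ht
      have htmem : t ∈ Icc (0 : ℝ) T0 := hsub2 ⟨ht.1, ht.2.le⟩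
      have htlt : t < T0 := by
        have : τ + ε ≤ T0 := by
          have := min_le_right (min (ε₁ / 2) (ε₂ / 2)) (T0 - τ); linarith
        linarith [ht.2]
      refine (hvd' t htmem).mono_of_mem_nhdsWithin ?_
      rw [mem_nhdsWithin]
      exact ⟨Iio T0, isOpen_Iio, htlt, fun u hu => ⟨le_trans htmem.1 hu.2, hu.1.le⟩⟩
    have hKlip : ∀ t : ℝ, LipschitzOnWith K ((fun _ : ℝ => Fvec G α) t)
        ((fun _ : ℝ => closedBall (v τ) ρ) t) :=
      fun t => hlip.mono hρball
    have key : Set.EqOn v v' (Icc τ (τ + ε)) :=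
      ODE_solution_unique_of_mem_Icc_right (fun t _ => hKlip t)
        (hvc.mono hsub2) hderiv (fun t ht => hmemv t ⟨ht.1, ht.2.le⟩)
        (hvc'.mono hsub2) hderiv' (fun t ht => hmemv' t ⟨ht.1, ht.2.le⟩)
        hτeq
    have hτεB : τ + ε ∈ B := by
      refine ⟨⟨by linarith, ?_⟩, fun u hu => ?_⟩
      · have := min_le_right (min (ε₁ / 2) (ε₂ / 2)) (T0 - τ); linarith
      · rcases le_or_gt u τ with h | h
        · exact hτB.2 ⟨hu.1, h⟩
        · exact key ⟨h.le, hu.2⟩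
    have := le_csSup hBdd hτεB
    linarith
end EntropyFlowPaper

end AuxLemmas6


open EntropyFlowPaper

/-- short-time existence and uniqueness for the entropy flow: there is `T₀ > 0`
such that the flow with positive initial weight `w0` has a unique solution on `[0, T₀]`. -/
theorem entropyFlow_short_time_existence_uniqueness {V : Type*} [Fintype V] [DecidableEq V]
    (G : SimpleGraph V) [DecidableRel G.Adj] (hG : G.Connected)
    (α : ℝ) (hα : α ∈ Set.Ioo (0 : ℝ) 1)
    (w0 : Sym2 V → ℝ) (hw0 : ∀ e ∈ G.edgeFinset, 0 < w0 e) :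
    ∃ T0 : ℝ, 0 < T0 ∧
      (∃ w : ℝ → Sym2 V → ℝ, IsEntropyFlowSolutionOn G α w0 (Set.Icc 0 T0) w) ∧
      (∀ w w' : ℝ → Sym2 V → ℝ,
        IsEntropyFlowSolutionOn G α w0 (Set.Icc 0 T0) w →
        IsEntropyFlowSolutionOn G α w0 (Set.Icc 0 T0) w' →
        ∀ t ∈ Set.Icc (0 : ℝ) T0, ∀ e ∈ G.edgeFinset, w t e = w' t e) := by
  classical
  set w0' : Sym2 V → ℝ := fun e => if e ∈ G.edgeFinset then w0 e else 0 with hw0'def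
  have hw0'Ω : w0' ∈ posRegion G := by
    intro e he
    simp only [hw0'def, if_pos he]
    exact hw0 e he
  obtain ⟨T0, hT0, L, r, C, hball, hpl⟩ := exists_good_pl hG hα hw0'Ω
  obtain ⟨f, hf0, hfprop⟩ := pl_exists_solution_mem hpl
  -- padding of an arbitrary solution
  have pad_sol : ∀ w : ℝ → Sym2 V → ℝ, IsEntropyFlowSolutionOn G α w0 (Set.Icc 0 T0) w →
      ((fun τ e => if e ∈ G.edgeFinset then w τ e else 0) 0 = w0') ∧
      (∀ t ∈ Set.Icc (0 : ℝ) T0,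
        HasDerivWithinAt (fun τ e => if e ∈ G.edgeFinset then w τ e else 0)
          (Fvec G α ((fun τ e => if e ∈ G.edgeFinset then w τ e else 0) t))
          (Set.Icc 0 T0) t) ∧
      (∀ t ∈ Set.Icc (0 : ℝ) T0,
        (fun τ (e : Sym2 V) => if e ∈ G.edgeFinset then w τ e else 0) t ∈ posRegion G) := by
    intro w hw
    obtain ⟨hinit, hpos, hderiv⟩ := hw
    refine ⟨?_, ?_, ?_⟩
    · funext e
      by_cases he : e ∈ G.edgeFinset
      · simp only [if_pos he, hw0'def]
        exact hinit e he
      · simp only [if_neg he, hw0'def]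
    · intro t ht
      rw [hasDerivWithinAt_pi]
      intro e
      induction e using Sym2.ind with
      | _ x y =>
        by_cases he : s(x, y) ∈ G.edgeFinset
        · have hadj : G.Adj x y := (SimpleGraph.mem_edgeSet G).1 (SimpleGraph.mem_edgeFinset.1 he)
          have hfun : (fun τ => if s(x, y) ∈ G.edgeFinset then w τ s(x, y) else 0)
              = fun τ => w τ s(x, y) := by
            funext τ; rw [if_pos he]
          rw [hfun, Fvec_adj hadj]
          have hcongr : entropyD G ((fun (e : Sym2 V) =>
              if e ∈ G.edgeFinset then w t e else 0)) α x y = entropyD G (w t) α x y := by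
            refine entropyD_congr (fun e' he' => ?_) α x y
            rw [if_pos he']
          rw [hcongr]
          exact hderiv t ht x y hadj
        · have hfun : (fun τ => if s(x, y) ∈ G.edgeFinset then w τ s(x, y) else 0)
              = fun _ => (0 : ℝ) := by
            funext τ; rw [if_neg he]
          rw [hfun, Fvec_not_edge he]
          exact hasDerivWithinAt_const t _ 0
    · intro t ht e he
      simp only [if_pos he]
      exact hpos t ht e he
  refine ⟨T0, hT0, ⟨f, ?_, ?_, ?_⟩, ?_⟩
  · -- initial condition
    intro e he
    rw [hf0]
    simp only [hw0'def, if_pos he]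
  · -- positivity
    intro t ht e he
    exact hball (hfprop t ht).1 e he
  · -- derivative
    intro t ht x y hadj
    have hd := (hfprop t ht).2
    have := hasDerivWithinAt_pi.1 hd s(x, y)
    rwa [Fvec_adj hadj] at this
  · -- uniqueness
    intro w w' hw hw' t ht e he
    obtain ⟨hw1, hw2, hw3⟩ := pad_sol w hw
    obtain ⟨hw1', hw2', hw3'⟩ := pad_sol w' hw'
    have huniq := entropy_flow_unique hG hα hT0 (hw1.trans hw1'.symm) hw2 hw3 hw2' hw3'
    have := congrFun (huniq ht) e
    simpa only [if_pos he] using this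
end

section
/- Let G=(V,E) be a connected finite graph with n vertices, α ∈ (0,1), and let w be any positive weight vector on E. For any edge e = xy ∈ E, the edge entropy satisfies the lower bound 𝔇_{xy}^α ≥ α log(α/R_y^α(x)) − 2(n−1)e^{−1}, where R_y^α(x) is the value at x of the α-lazy outward random walk centered at y. -/
open Finset Filter Topology

open EntropyFlowPaper


section Lemmas

variable {V : Type*} [Fintype V] [DecidableEq V]
variable (G : SimpleGraph V) [DecidableRel G.Adj]

lemma my_ew_nonneg (w : Sym2 V → ℝ) (hw : ∀ e ∈ G.edgeFinset, 0 < w e) (a b : V) :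
    0 ≤ ew G w a b := by
  unfold ew
  split_ifs with h
  · exact (hw _ (by simpa [SimpleGraph.mem_edgeFinset] using h)).le
  · exact le_rfl

lemma my_outP_nonneg (w : Sym2 V → ℝ) (hw : ∀ e ∈ G.edgeFinset, 0 < w e) (x : V) (j : ℕ) :
    ∀ z, 0 ≤ outP G w x j z := by
  induction j with
  | zero => intro z; simp only [outP]; split_ifs <;> norm_num
  | succ ℓ ih =>
      intro z
      simp only [outP]
      refine Finset.sum_nonneg fun y _ => div_nonneg (mul_nonneg (ih y) (my_ew_nonneg G w hw y z))
        (Finset.sum_nonneg fun u _ => my_ew_nonneg G w hw y u)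

lemma my_sum_outP_le_one (w : Sym2 V → ℝ) (hw : ∀ e ∈ G.edgeFinset, 0 < w e) (x : V) (j : ℕ) :
    ∑ z ∈ layer G x j, outP G w x j z ≤ 1 := by
  induction j with
  | zero => simp [layer, layerAux, outP]
  | succ ℓ ih =>
      simp only [outP]
      rw [Finset.sum_comm]
      refine le_trans (Finset.sum_le_sum fun y hy => ?_) ih
      set D := ∑ u ∈ layer G x (ℓ + 1), ew G w y u with hD
      rcases eq_or_ne D 0 with h0 | h0
      · rw [h0]
        simp only [div_zero]
        simp [my_outP_nonneg G w hw x ℓ y]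
      · rw [← Finset.sum_div, ← Finset.mul_sum, ← hD, mul_div_assoc, div_self h0, mul_one]

lemma my_outP_le_one (w : Sym2 V → ℝ) (hw : ∀ e ∈ G.edgeFinset, 0 < w e) (x z : V) (j : ℕ)
    (hz : z ∈ layer G x j) : outP G w x j z ≤ 1 :=
  le_trans (Finset.single_le_sum (fun i _ => my_outP_nonneg G w hw x j i) hz)
    (my_sum_outP_le_one G w hw x j)

lemma my_layer_subset_snd (x : V) (j : ℕ) : layer G x j ⊆ (layerAux G x j).2 := by
  cases j with
  | zero => simp [layer, layerAux]
  | succ m => exact Finset.subset_union_right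

lemma my_snd_mono (x : V) {j k : ℕ} (h : j ≤ k) :
    (layerAux G x j).2 ⊆ (layerAux G x k).2 := by
  induction h with
  | refl => exact subset_rfl
  | step _ ih => exact ih.trans Finset.subset_union_left

lemma my_layer_succ_disj (x z : V) (j : ℕ) (hz : z ∈ layer G x (j + 1)) :
    z ∉ (layerAux G x j).2 := by
  have h : z ∉ (layerAux G x j).2 ∧ ∃ a ∈ (layerAux G x j).2, G.Adj z a := by
    simpa [layer, layerAux, Finset.mem_filter] using hz
  exact h.1

lemma my_layer_disjoint (x z : V) {j k : ℕ} (hj : 1 ≤ j) (hjk : j < k)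
    (h1 : z ∈ layer G x j) (h2 : z ∈ layer G x k) : False := by
  obtain ⟨m, rfl⟩ : ∃ m, k = m + 1 := ⟨k - 1, by omega⟩
  exact my_layer_succ_disj G x z m h2
    (my_snd_mono G x (by omega : j ≤ m) (my_layer_subset_snd G x j h1))

end Lemmas

set_option linter.unusedSectionVars false

section Lemmas2

variable {V : Type*} [Fintype V] [DecidableEq V]
variable (G : SimpleGraph V) [DecidableRel G.Adj]

lemma my_lazyWalk_nonneg (w : Sym2 V → ℝ) (hw : ∀ e ∈ G.edgeFinset, 0 < w e) {α : ℝ}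
    (h0 : 0 ≤ α) (h1 : α ≤ 1) (x z : V) : 0 ≤ lazyWalk G w α x z := by
  unfold lazyWalk
  split_ifs with h
  · exact h0
  · refine Finset.sum_nonneg fun j _ => ?_
    have hp : (0:ℝ) ≤ (1 - α) ^ j := pow_nonneg (by linarith) j
    split_ifs with h2 h3
    · exact mul_nonneg (mul_nonneg hp h0) (my_outP_nonneg G w hw x j z)
    · exact mul_nonneg hp (my_outP_nonneg G w hw x j z)
    · exact le_rfl

lemma my_lazyWalk_le (w : Sym2 V → ℝ) (hw : ∀ e ∈ G.edgeFinset, 0 < w e) {α : ℝ}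
    (h0 : 0 ≤ α) (h1 : α ≤ 1) (x z : V) (hz : z ≠ x) : lazyWalk G w α x z ≤ 1 - α := by
  unfold lazyWalk
  rw [if_neg hz]
  by_cases hex : ∃ j ∈ Finset.Icc 1 (Fintype.card V), z ∈ layer G x j
  · obtain ⟨j0, hj0, hz0⟩ := hex
    have hj01 : 1 ≤ j0 := (Finset.mem_Icc.mp hj0).1
    rw [Finset.sum_eq_single_of_mem j0 hj0 ?h0]
    case h0 =>
      intro j hj hne
      rw [if_neg]
      intro hmem
      rcases lt_or_gt_of_ne hne with h | h
      · exact my_layer_disjoint G x z (Finset.mem_Icc.mp hj).1 h hmem hz0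
      · exact my_layer_disjoint G x z hj01 h hz0 hmem
    rw [if_pos hz0]
    have hple : (1 - α) ^ j0 ≤ 1 - α := by
      calc (1 - α) ^ j0 ≤ (1 - α) ^ 1 :=
            pow_le_pow_of_le_one (by linarith) (by linarith) hj01
        _ = 1 - α := pow_one _
    have hpn : (0:ℝ) ≤ (1 - α) ^ j0 := pow_nonneg (by linarith) j0
    have hP0 : 0 ≤ outP G w x j0 z := my_outP_nonneg G w hw x j0 z
    have hP1 : outP G w x j0 z ≤ 1 := my_outP_le_one G w hw x z j0 hz0
    split_ifs with hadj
    · calc (1 - α) ^ j0 * α * outP G w x j0 z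
          = (1 - α) ^ j0 * (α * outP G w x j0 z) := by ring
        _ ≤ (1 - α) ^ j0 * 1 := mul_le_mul_of_nonneg_left (by nlinarith) hpn
        _ = (1 - α) ^ j0 := mul_one _
        _ ≤ 1 - α := hple
    · calc (1 - α) ^ j0 * outP G w x j0 z
          ≤ (1 - α) ^ j0 * 1 := mul_le_mul_of_nonneg_left hP1 hpn
        _ = (1 - α) ^ j0 := mul_one _
        _ ≤ 1 - α := hple
  · rw [Finset.sum_eq_zero]
    · linarith
    · intro j hj
      rw [if_neg fun hmem => hex ⟨j, hj, hmem⟩]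

lemma my_mul_log_ge (a b : ℝ) (ha : 0 ≤ a) (hb : 0 ≤ b) :
    -(b * Real.exp (-1)) ≤ a * Real.log (a / b) := by
  rcases eq_or_lt_of_le ha with h | h
  · rw [← h, zero_mul]
    have := mul_nonneg hb (Real.exp_pos (-1)).le
    linarith
  rcases eq_or_lt_of_le hb with hb0 | hb0
  · rw [← hb0, div_zero, Real.log_zero, mul_zero, zero_mul, neg_zero]
  · set t : ℝ := a / b with ht
    have htpos : 0 < t := div_pos h hb0
    have h1 : -Real.log t ≤ Real.exp (-1) / t := by
      have h2 := Real.add_one_le_exp (-1 - Real.log t)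
      have h3 : Real.exp (-1 - Real.log t) = Real.exp (-1) / t := by
        rw [Real.exp_sub, Real.exp_log htpos]
      linarith [h3.le, h3.ge]
    have h4 : -(t * Real.log t) ≤ Real.exp (-1) := by
      have h5 := mul_le_mul_of_nonneg_left h1 htpos.le
      rw [mul_div_cancel₀ _ (ne_of_gt htpos)] at h5
      nlinarith
    have h6 : a * Real.log t = b * (t * Real.log t) := by
      rw [ht]; field_simp
    rw [h6]
    nlinarith [mul_le_mul_of_nonneg_left h4 hb]

end Lemmas2


/-- for any positive weight vector and any edge `xy`, the edge entropy satisfies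
`𝔇_{xy}^α ≥ α log (α / R_y^α(x)) - 2 (n - 1) e⁻¹`. -/
theorem entropyD_lower_bound {V : Type*} [Fintype V] [DecidableEq V]
    (G : SimpleGraph V) [DecidableRel G.Adj] (hG : G.Connected)
    (α : ℝ) (hα : α ∈ Set.Ioo (0 : ℝ) 1)
    (w : Sym2 V → ℝ) (hw : ∀ e ∈ G.edgeFinset, 0 < w e)
    (x y : V) (hxy : G.Adj x y) :
    α * Real.log (α / lazyWalk G w α y x) - 2 * ((Fintype.card V : ℝ) - 1) * Real.exp (-1)
      ≤ entropyD G w α x y := by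
  obtain ⟨hα0, hα1⟩ := hα
  have hxney : x ≠ y := hxy.ne
  have hcard : 2 ≤ Fintype.card V := Fintype.one_lt_card_iff_nontrivial.mpr ⟨x, y, hxney⟩
  set Rx := lazyWalk G w α x with hRxdef
  set Ry := lazyWalk G w α y with hRydef
  have hRxnn : ∀ z, 0 ≤ Rx z := fun z => my_lazyWalk_nonneg G w hw hα0.le hα1.le x z
  have hRynn : ∀ z, 0 ≤ Ry z := fun z => my_lazyWalk_nonneg G w hw hα0.le hα1.le y z
  have hRxle : ∀ z, z ≠ x → Rx z ≤ 1 - α := fun z hz => my_lazyWalk_le G w hw hα0.le hα1.le x z hz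
  have hRyle : ∀ z, z ≠ y → Ry z ≤ 1 - α := fun z hz => my_lazyWalk_le G w hw hα0.le hα1.le y z hz
  have hRxx : Rx x = α := by simp [hRxdef, lazyWalk]
  have hRyy : Ry y = α := by simp [hRydef, lazyWalk]
  have hexp : (0:ℝ) < Real.exp (-1) := Real.exp_pos _
  set n : ℝ := (Fintype.card V : ℝ) with hndef
  have hn : (2:ℝ) ≤ n := by rw [hndef]; exact_mod_cast hcard
  set E := Real.exp (-1) with hEdef
  have hymem : y ∈ Finset.univ.erase x := Finset.mem_erase.mpr ⟨hxney.symm, Finset.mem_univ y⟩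
  have hsumRy : ∑ z ∈ Finset.univ.erase x, Ry z ≤ α + (n - 2) * (1 - α) := by
    rw [← Finset.add_sum_erase _ _ hymem, hRyy]
    have hb : ∑ z ∈ (Finset.univ.erase x).erase y, Ry z ≤
        ((Finset.univ.erase x).erase y).card • (1 - α) :=
      Finset.sum_le_card_nsmul _ _ _ fun z hz => hRyle z (Finset.mem_erase.mp hz).1
    have hc : (((Finset.univ.erase x).erase y).card : ℝ) = n - 2 := by
      rw [Finset.card_erase_of_mem hymem, Finset.card_erase_of_mem (Finset.mem_univ x),
        Finset.card_univ, show Fintype.card V - 1 - 1 = Fintype.card V - 2 from by omega,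
        Nat.cast_sub hcard, hndef]
      norm_num
    rw [nsmul_eq_mul, hc] at hb
    linarith
  have hsumRx : ∑ z ∈ Finset.univ.erase x, Rx z ≤ (n - 1) * (1 - α) := by
    have hb : ∑ z ∈ Finset.univ.erase x, Rx z ≤ (Finset.univ.erase x).card • (1 - α) :=
      Finset.sum_le_card_nsmul _ _ _ fun z hz => hRxle z (Finset.mem_erase.mp hz).1
    have hc : ((Finset.univ.erase x).card : ℝ) = n - 1 := by
      rw [Finset.card_erase_of_mem (Finset.mem_univ x), Finset.card_univ,
        Nat.cast_sub (by omega : 1 ≤ Fintype.card V), hndef]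
      norm_num
    rw [nsmul_eq_mul, hc] at hb
    linarith
  have hKL1 : α * Real.log (α / Ry x) - (α + (n - 2) * (1 - α)) * E ≤ KL Rx Ry := by
    rw [KL, ← Finset.add_sum_erase _ _ (Finset.mem_univ x), hRxx]
    have hterms : ∑ z ∈ Finset.univ.erase x, -(Ry z * E) ≤
        ∑ z ∈ Finset.univ.erase x, Rx z * Real.log (Rx z / Ry z) :=
      Finset.sum_le_sum fun z _ => my_mul_log_ge _ _ (hRxnn z) (hRynn z)
    have heq : ∑ z ∈ Finset.univ.erase x, -(Ry z * E) =
        -((∑ z ∈ Finset.univ.erase x, Ry z) * E) := by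
      rw [Finset.sum_mul]
      simp
    rw [heq] at hterms
    have h2 : -((α + (n - 2) * (1 - α)) * E) ≤ -((∑ z ∈ Finset.univ.erase x, Ry z) * E) := by
      have := mul_le_mul_of_nonneg_right hsumRy hexp.le
      linarith
    linarith
  have hKL2 : -((α + (n - 1) * (1 - α)) * E) ≤ KL Ry Rx := by
    have hsum : ∑ z, Rx z ≤ α + (n - 1) * (1 - α) := by
      rw [← Finset.add_sum_erase _ _ (Finset.mem_univ x), hRxx]
      linarith
    have hterms : ∑ z, -(Rx z * E) ≤ ∑ z, Ry z * Real.log (Ry z / Rx z) :=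
      Finset.sum_le_sum fun z _ => my_mul_log_ge _ _ (hRynn z) (hRxnn z)
    have heq : ∑ z : V, -(Rx z * E) = -((∑ z : V, Rx z) * E) := by
      rw [Finset.sum_mul]
      simp
    rw [heq] at hterms
    have h2 : -((α + (n - 1) * (1 - α)) * E) ≤ -((∑ z : V, Rx z) * E) := by
      have := mul_le_mul_of_nonneg_right hsum hexp.le
      linarith
    calc -((α + (n - 1) * (1 - α)) * E) ≤ -((∑ z : V, Rx z) * E) := h2
      _ ≤ ∑ z, Ry z * Real.log (Ry z / Rx z) := hterms
      _ = KL Ry Rx := rfl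
  have hfinal : ((α + (n - 2) * (1 - α)) + (α + (n - 1) * (1 - α))) * E ≤ 2 * (n - 1) * E := by
    apply mul_le_mul_of_nonneg_right _ hexp.le
    nlinarith
  rw [entropyD, ← hRxdef, ← hRydef]
  linarith [hKL1, hKL2, hfinal]
end
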